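/- arXiv:2605.06687 — 3 statements merged into one kernel-verified Lean document; each statement's English description precedes it below -/
import Mathlib

section
/- For z > 0 and every integer n ≥ 1, the converging factor φ_n(z) = (1/Γ(2n+1)) ∫₀^∞ t^n · (t^{-1/2} e^{-√t}/2)/(t+z) dt of the Stieltjes series with moments (2n)! satisfies φ_n(z) = ∫₀^1 t^{n-1} Φ(t) dt with Φ(t) = (1/(2√z)) · sin(√z · (1/√t − 1)). -/
/-!
Substituting `t = x²` turns the left side into `(2n)!⁻¹ ∫₀^∞ x^{2n} e^{-x} / (x² + z) dx`.
With `a = √z`, write `1 / (x² + a²) = a⁻¹ ∫₀^∞ e^{-xv} sin(av) dv` and integrate out `x` first: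
the Gamma integral gives `a⁻¹ ∫₀^∞ sin(av) / (1 + v)^{2n+1} dv`, the exchange being legitimate
because `2n ≥ 1` makes the integrand absolutely integrable. The substitution `t = (1 + v)⁻²`
carries the right side to the same integral.
-/

open MeasureTheory Real Set
open scoped Nat

lemma integral_pow_mul_rpow_neg_half_mul_exp_neg_sqrt_div_add (n : ℕ) (z : ℝ) :
    ∫ t in Ioi 0, t ^ n * (t ^ (-(1 : ℝ) / 2) * exp (-√t) / 2) / (t + z)
      = ∫ x in Ioi 0, x ^ (2 * n) * exp (-x) / (x ^ 2 + z) := by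
  rw [← integral_comp_rpow_Ioi_of_pos
    (g := fun t => t ^ n * (t ^ (-(1 : ℝ) / 2) * exp (-√t) / 2) / (t + z)) two_pos]
  refine setIntegral_congr_fun measurableSet_Ioi fun x (hx : 0 < x) => ?_
  have hroot : (x ^ 2) ^ (-(1 : ℝ) / 2) = x⁻¹ := by
    rw [neg_div, rpow_neg (sq_nonneg x), ← sqrt_eq_rpow, sqrt_sq hx.le]
  rw [show (2 : ℝ) - 1 = 1 by norm_num, rpow_one]
  simp only [smul_eq_mul, rpow_two, hroot, sqrt_sq hx.le, ← pow_mul]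
  field_simp

lemma integral_exp_neg_mul_mul_sin_Ioi {x : ℝ} (hx : 0 < x) (a : ℝ) :
    ∫ v in Ioi 0, exp (-(x * v)) * sin (a * v) = a / (x ^ 2 + a ^ 2) := by
  have hre : (-x + a * Complex.I).re < 0 := by simpa using hx
  have him : ∀ v : ℝ, exp (-(x * v)) * sin (a * v)
      = RCLike.im (Complex.exp ((-x + a * Complex.I) * v)) := fun v => by
    simp [Complex.exp_im, neg_mul]
  simp_rw [him]
  rw [integral_im (integrableOn_exp_mul_complex_Ioi hre 0), integral_exp_mul_complex_Ioi hre 0]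
  simp only [Complex.ofReal_zero, mul_zero, Complex.exp_zero, RCLike.im_to_complex, Complex.div_im,
    Complex.neg_im, Complex.one_im, neg_zero, Complex.add_re, Complex.neg_re, Complex.ofReal_re,
    Complex.mul_re, Complex.I_re, Complex.ofReal_im, Complex.I_im, mul_one, sub_self, add_zero,
    mul_neg, zero_mul, Complex.normSq_apply, neg_mul, neg_neg, Complex.add_im, Complex.mul_im,
    zero_add, zero_div, Complex.one_re, one_mul, zero_sub]
  field_simp

lemma integral_pow_mul_exp_neg_mul_Ioi (k : ℕ) {r : ℝ} (hr : 0 < r) :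
    ∫ t in Ioi 0, t ^ k * exp (-(r * t)) = k ! / r ^ (k + 1) := by
  have h := integral_rpow_mul_exp_neg_mul_Ioi (a := k + 1) (by positivity) hr
  simp_rw [add_sub_cancel_right, rpow_natCast, Real.Gamma_nat_eq_factorial] at h
  rw [← Nat.cast_add_one, rpow_natCast] at h
  rw [h, one_div, inv_pow, inv_mul_eq_div]

lemma integrable_pow_mul_exp_neg_mul_mul_sin {k : ℕ} (hk : 1 ≤ k) (a : ℝ) :
    Integrable (Function.uncurry fun x v : ℝ => x ^ k * exp (-(x * (1 + v))) * sin (a * v))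
      ((volume.restrict (Ioi 0)).prod (volume.restrict (Ioi 0))) := by
  -- with `|x|` the domination below holds everywhere, not just on the quadrant
  set G : ℝ → ℝ → ℝ := fun x v => |x| ^ k * exp (-x) * exp (-x * v)
  have hG_nonneg : ∀ x v, 0 ≤ G x v := fun x v => by positivity
  have hG_section : ∀ x, 0 < x → ∫ v in Ioi 0, G x v = exp (-x) * x ^ ((k : ℝ) - 1) := by
    intro x hx
    rw [integral_const_mul, integral_exp_mul_Ioi (neg_lt_zero.2 hx), rpow_sub_one hx.ne',
      rpow_natCast, abs_of_pos hx]
    field_simp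
    simp
  have hG : Integrable (Function.uncurry G)
      ((volume.restrict (Ioi 0)).prod (volume.restrict (Ioi 0))) := by
    rw [integrable_prod_iff (by fun_prop : Continuous (Function.uncurry G)).aestronglyMeasurable]
    refine ⟨(ae_restrict_iff' measurableSet_Ioi).2 (ae_of_all _ fun x hx =>
      (integrableOn_exp_mul_Ioi (neg_lt_zero.2 hx) 0).const_mul (|x| ^ k * exp (-x))), ?_⟩
    refine (GammaIntegral_convergent (Nat.cast_pos.2 hk)).congr_fun (fun x hx => ?_)
      measurableSet_Ioi
    simp only [Function.uncurry_apply_pair, norm_of_nonneg (hG_nonneg x _)]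
    exact (hG_section x hx).symm
  refine hG.mono' (by fun_prop : Continuous _).aestronglyMeasurable (ae_of_all _ ?_)
  rintro ⟨x, v⟩
  have hexp : exp (-(x * (1 + v))) = exp (-x) * exp (-x * v) := by
    rw [← exp_add]; ring_nf
  simp only [Function.uncurry_apply_pair, norm_mul, norm_pow, norm_eq_abs, abs_exp, hexp]
  rw [← mul_assoc]
  exact mul_le_of_le_one_right (hG_nonneg x v) (abs_sin_le_one _)

lemma integral_pow_mul_exp_neg_div_sq_add_sq {k : ℕ} (hk : 1 ≤ k) {a : ℝ} (ha : a ≠ 0) :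
    ∫ x in Ioi 0, x ^ k * exp (-x) / (x ^ 2 + a ^ 2)
      = k ! / a * ∫ v in Ioi 0, sin (a * v) / (1 + v) ^ (k + 1) := by
  have hlaplace : ∀ x ∈ Ioi (0 : ℝ), x ^ k * exp (-x) / (x ^ 2 + a ^ 2)
      = a⁻¹ * ∫ v in Ioi 0, x ^ k * exp (-(x * (1 + v))) * sin (a * v) := by
    intro x hx
    have hsplit : ∀ v, x ^ k * exp (-(x * (1 + v))) * sin (a * v)
        = x ^ k * exp (-x) * (exp (-(x * v)) * sin (a * v)) := fun v => by
      rw [mul_one_add, neg_add, exp_add]; ring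
    simp_rw [hsplit]
    rw [integral_const_mul, integral_exp_neg_mul_mul_sin_Ioi hx]
    field_simp
  have hgamma : ∀ v ∈ Ioi (0 : ℝ), ∫ x in Ioi 0, x ^ k * exp (-(x * (1 + v))) * sin (a * v)
      = k ! * (sin (a * v) / (1 + v) ^ (k + 1)) := by
    intro v (hv : 0 < v)
    have hswap : ∀ x, x ^ k * exp (-(x * (1 + v))) * sin (a * v)
        = x ^ k * exp (-((1 + v) * x)) * sin (a * v) := fun x => by rw [mul_comm x]
    simp_rw [hswap]
    rw [integral_mul_const, integral_pow_mul_exp_neg_mul_Ioi k (by linarith)]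
    ring
  rw [setIntegral_congr_fun measurableSet_Ioi hlaplace, integral_const_mul,
    integral_integral_swap (integrable_pow_mul_exp_neg_mul_mul_sin hk a),
    setIntegral_congr_fun measurableSet_Ioi hgamma, integral_const_mul]
  ring

lemma integral_Ioo_zero_one_eq_integral_Ioi {E : Type*} [NormedAddCommGroup E] [NormedSpace ℝ E]
    (g : ℝ → E) :
    ∫ t in Ioo 0 1, g t = ∫ v in Ioi 0, (2 / (1 + v) ^ 3) • g ((1 + v) ^ 2)⁻¹ := by
  set f : ℝ → ℝ := fun v => ((1 + v) ^ 2)⁻¹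
  have hpos : ∀ v ∈ Ioi (0 : ℝ), 0 < 1 + v := fun v (hv : 0 < v) => by linarith
  have hderiv : ∀ v ∈ Ioi (0 : ℝ), HasDerivWithinAt f (-(2 / (1 + v) ^ 3)) (Ioi 0) v := by
    intro v hv
    have hv' := (hpos v hv).ne'
    refine ((((hasDerivAt_id' v).const_add 1).fun_pow 2).inv
      (pow_ne_zero 2 hv')).hasDerivWithinAt.congr_deriv ?_
    field_simp
    norm_num [mul_comm]
  have hinj : InjOn f (Ioi 0) := fun x hx y hy h => by
    have := (pow_left_inj₀ (hpos x hx).le (hpos y hy).le two_ne_zero).1 (inv_inj.1 h)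
    linarith
  have himage : f '' Ioi 0 = Ioo 0 1 := by
    ext t
    constructor
    · rintro ⟨v, hv : 0 < v, rfl⟩
      exact ⟨inv_pos.2 (pow_pos (by linarith) 2),
        inv_lt_one_of_one_lt₀ (one_lt_pow₀ (by linarith) two_ne_zero)⟩
    · rintro ⟨h0, h1⟩
      have hs : √t < 1 := (sqrt_lt' one_pos).2 (by simpa using h1)
      refine ⟨1 / √t - 1, ?_, ?_⟩
      · simpa [mem_Ioi, sub_pos] using (one_lt_inv₀ (sqrt_pos.2 h0)).2 hs
      · simp [f, sq_sqrt h0.le]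
  rw [← himage, integral_image_eq_integral_abs_deriv_smul measurableSet_Ioi hderiv hinj]
  refine setIntegral_congr_fun measurableSet_Ioi fun v hv => ?_
  rw [abs_neg, abs_of_pos (by have := hpos v hv; positivity)]

lemma integral_pow_mul_sin_inv_sqrt_sub_one (a : ℝ) (m : ℕ) :
    ∫ t in (0 : ℝ)..1, t ^ m * ((1 / (2 * a)) * sin (a * (1 / √t - 1)))
      = a⁻¹ * ∫ v in Ioi 0, sin (a * v) / (1 + v) ^ (2 * m + 3) := by
  rw [intervalIntegral.integral_of_le zero_le_one, integral_Ioc_eq_integral_Ioo,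
    integral_Ioo_zero_one_eq_integral_Ioi, ← integral_const_mul]
  refine setIntegral_congr_fun measurableSet_Ioi fun v (hv : 0 < v) => ?_
  rw [sqrt_inv, sqrt_sq (by linarith)]
  simp only [one_div, inv_inv, add_sub_cancel_left, smul_eq_mul, inv_pow, ← pow_mul]
  field_simp
  ring

theorem convergingFactor_integralRep_q0 (z : ℝ) (hz : 0 < z) (n : ℕ) (hn : 1 ≤ n) :
    (1 / Real.Gamma (2 * n + 1)) *
        ∫ t in Set.Ioi (0:ℝ),
          (t : ℝ) ^ n * (t ^ (-(1:ℝ)/2) * Real.exp (-Real.sqrt t) / 2) / (t + z)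
      = ∫ t in (0:ℝ)..1,
          (t : ℝ) ^ (n - 1) *
            ((1 / (2 * Real.sqrt z)) * Real.sin (Real.sqrt z * (1 / Real.sqrt t - 1))) := by
  obtain ⟨m, rfl⟩ : ∃ m, n = m + 1 := ⟨n - 1, (Nat.sub_add_cancel hn).symm⟩
  have ha : √z ≠ 0 := (sqrt_pos.2 hz).ne'
  have hlhs := integral_pow_mul_exp_neg_div_sq_add_sq (k := 2 * (m + 1)) (by omega) ha
  rw [sq_sqrt hz.le] at hlhs
  have hgamma : Gamma (2 * ((m + 1 : ℕ) : ℝ) + 1) = (2 * (m + 1)) ! := by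
    exact_mod_cast Gamma_nat_eq_factorial (2 * (m + 1))
  rw [integral_pow_mul_rpow_neg_half_mul_exp_neg_sqrt_div_add, hlhs, hgamma,
    Nat.add_sub_cancel, integral_pow_mul_sin_inv_sqrt_sub_one,
    show 2 * (m + 1) + 1 = 2 * m + 3 by ring]
  field_simp
end

section
/- Let Δ denote the forward difference operator in n, Δg(n) = g(n+1) − g(n), and Δ^k its k-th iterate. Then for all k ≥ 1, n ≥ 0, real γ > 0, and t ∈ (0,1): Δ^k{(n+γ)_{k-1} · t^n} = (-1)^k (n+γ)_{k-1} t^n · ₂F₁(-k, k+n+γ-1; n+γ; t), where (a)_m is the Pochhammer symbol and ₂F₁ is the Gauss hypergeometric function (here a terminating polynomial of degree k in t). -/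
open Finset

/-- Pochhammer symbol `(a)_m = a (a+1) ⋯ (a+m-1)` for real `a`. -/
noncomputable def poch (a : ℝ) (m : ℕ) : ℝ := ∏ i ∈ Finset.range m, (a + i)

/-- Forward difference operator in `n`. -/
def fdiff (g : ℕ → ℝ) : ℕ → ℝ := fun n => g (n + 1) - g n

/-- The terminating Gauss hypergeometric polynomial
`₂F₁(-k, b; c; t) = ∑_{j=0}^k ((-k)_j (b)_j / (c)_j) t^j / j!`. -/
noncomputable def twoF1 (k : ℕ) (b c t : ℝ) : ℝ :=
  ∑ j ∈ Finset.range (k + 1),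
    poch (-(k : ℝ)) j * poch b j / (poch c j * (Nat.factorial j)) * t ^ j

/-!
Expand `Δ^k` by the binomial formula: with `c = n + γ`, the `j`-th term is
`(-1)^(k-j) C(k,j) (c+j)_(k-1) t^(n+j)`. Since `(c)_j (c+j)_(k-1) = (c)_(k-1) (c+k-1)_j`
(both are `(c)_(j+k-1)`) and `(-1)^(k-j) C(k,j) = (-1)^k (-k)_j / j!`, it equals
`(-1)^k (c)_(k-1) t^n` times the `j`-th term of `₂F₁(-k, c+k-1; c; t)`.
-/

open Polynomial Nat

lemma poch_eq_eval_ascPochhammer (a : ℝ) (m : ℕ) : poch a m = (ascPochhammer ℝ m).eval a := by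
  induction m with
  | zero => simp [poch]
  | succ m ih => rw [poch, prod_range_succ, ← poch, ih, ascPochhammer_succ_eval]

lemma poch_pos {a : ℝ} (ha : 0 < a) (m : ℕ) : 0 < poch a m :=
  prod_pos fun _ _ => by positivity

lemma poch_add (a : ℝ) (m r : ℕ) : poch a (m + r) = poch a m * poch (a + m) r := by
  simp only [poch_eq_eval_ascPochhammer, ← ascPochhammer_mul, eval_mul, eval_comp, eval_add,
    eval_X, eval_natCast]

lemma poch_mul_poch_add_comm (a : ℝ) (m r : ℕ) :
    poch a m * poch (a + m) r = poch a r * poch (a + r) m := by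
  rw [← poch_add, ← poch_add, add_comm]

lemma poch_neg_natCast (k j : ℕ) : poch (-k) j = (-1) ^ j * j ! * k.choose j := by
  rw [poch_eq_eval_ascPochhammer, ascPochhammer_eval_neg_eq_descPochhammer,
    descPochhammer_eval_eq_descFactorial, descFactorial_eq_factorial_mul_choose]
  push_cast
  ring

lemma neg_one_pow_sub_mul_choose {k j : ℕ} (hj : j ≤ k) :
    (-1 : ℝ) ^ (k - j) * k.choose j = (-1) ^ k * poch (-k) j / j ! := by
  have hsign : (-1 : ℝ) ^ k = (-1) ^ (k - j) * (-1) ^ j := by rw [← pow_add, Nat.sub_add_cancel hj]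
  rw [poch_neg_natCast, hsign]
  field_simp
  rw [← pow_mul, pow_mul', neg_one_sq, one_pow, mul_one]

lemma fdiff_iterate_apply (g : ℕ → ℝ) (k n : ℕ) :
    fdiff^[k] g n = ∑ j ∈ range (k + 1), (-1 : ℝ) ^ (k - j) * k.choose j * g (n + j) := by
  change (fwdDiff 1)^[k] g n = _
  simp [fwdDiff_iter_eq_sum_shift]

theorem fdiff_pochhammer_hypergeometric_general (k n : ℕ) (hk : 1 ≤ k) (γ : ℝ) (hγ : 0 < γ)
    (t : ℝ) :
    (fdiff^[k] (fun m : ℕ => poch ((m : ℝ) + γ) (k - 1) * t ^ m)) n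
      = (-1 : ℝ) ^ k * poch ((n : ℝ) + γ) (k - 1) * t ^ n *
          twoF1 k ((k : ℝ) + n + γ - 1) ((n : ℝ) + γ) t := by
  obtain ⟨m, rfl⟩ : ∃ m, k = m + 1 := ⟨k - 1, by omega⟩
  rw [add_tsub_cancel_right, fdiff_iterate_apply, twoF1, mul_sum]
  refine sum_congr rfl fun j hj => ?_
  set c : ℝ := n + γ
  have hc : poch c j ≠ 0 := (poch_pos (by positivity) j).ne'
  have hshift : ((n + j : ℕ) : ℝ) + γ = c + j := by push_cast; ring
  have hb : ((m + 1 : ℕ) : ℝ) + n + γ - 1 = c + m := by push_cast; ring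
  rw [neg_one_pow_sub_mul_choose (mem_range_succ_iff.mp hj), hshift, hb]
  field_simp
  linear_combination poch (-((m + 1 : ℕ) : ℝ)) j * t ^ (n + j) * poch_mul_poch_add_comm c j m

theorem fdiff_pochhammer_hypergeometric (k n : ℕ) (hk : 1 ≤ k) (γ : ℝ) (hγ : 0 < γ)
    (t : ℝ) (ht : t ∈ Set.Ioo (0:ℝ) 1) :
    (fdiff^[k] (fun m : ℕ => poch ((m : ℝ) + γ) (k - 1) * t ^ m)) n
      = (-1 : ℝ) ^ k * poch ((n : ℝ) + γ) (k - 1) * t ^ n *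
          twoF1 k ((k : ℝ) + n + γ - 1) ((n : ℝ) + γ) t :=
  fdiff_pochhammer_hypergeometric_general k n hk γ hγ t
end

section
/- Fix z > 0 and k ≥ 1. The equation k = (√z/2)·cos(θ/2)/sin²(θ/2) has a unique solution θ_s in (0,π), and as k → ∞ one has θ_s ~ √2 · z^{1/4} / √k, i.e. lim_{k→∞} θ_s √k = √2 z^{1/4}. -/
/-!
The right-hand side `f θ = (√z/2) cos (θ/2) / sin² (θ/2)` is continuous and strictly decreasing on
`(0, π)`, tends to `∞` at `0⁺` and vanishes at `π`, so it takes every value `k > 0` exactly once.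
As `k → ∞` monotonicity forces `θ_k → 0`, and `θ² f θ = 2√z cos (θ/2) / sinc² (θ/2)` is continuous
at `0` with value `2√z`; hence `θ_k² k → 2√z`.
-/

open Real Filter Set Topology

/-- `θ` is a stationary point of `φ₊(θ) = kθ + √z (1 / sin (θ/2) - 1)` exactly when
`k = stationaryFreq z θ`. -/
noncomputable def stationaryFreq (z θ : ℝ) : ℝ := √z / 2 * cos (θ / 2) / sin (θ / 2) ^ 2

section

variable {z : ℝ}

lemma stationaryFreq_strictAntiOn (hz : 0 < z) : StrictAntiOn (stationaryFreq z) (Ioo 0 π) := by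
  rintro a ⟨ha₀, haπ⟩ b ⟨hb₀, hbπ⟩ hab
  have hsin_a : 0 < sin (a / 2) := sin_pos_of_pos_of_lt_pi (by linarith) (by linarith)
  have hsin : sin (a / 2) < sin (b / 2) :=
    sin_lt_sin_of_lt_of_le_pi_div_two (by linarith) (by linarith) (by linarith)
  have hcos : cos (b / 2) < cos (a / 2) :=
    cos_lt_cos_of_nonneg_of_le_pi (by linarith) (by linarith) (by linarith)
  have hcos_a : 0 < cos (a / 2) := cos_pos_of_mem_Ioo ⟨by linarith, by linarith⟩
  unfold stationaryFreq
  gcongr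

lemma continuousOn_stationaryFreq : ContinuousOn (stationaryFreq z) (Ioo 0 π) := by
  refine ContinuousOn.div (by fun_prop) (by fun_prop) fun θ ⟨h₀, hπ⟩ => ?_
  exact pow_ne_zero 2 (sin_pos_of_pos_of_lt_pi (by linarith) (by linarith)).ne'

lemma tendsto_stationaryFreq_pi : Tendsto (stationaryFreq z) (𝓝 π) (𝓝 0) := by
  have hcont : ContinuousAt (stationaryFreq z) π :=
    ContinuousAt.div (by fun_prop) (by fun_prop) (by simp)
  simpa [stationaryFreq] using hcont.tendsto

lemma tendsto_stationaryFreq_nhdsGT_zero (hz : 0 < z) :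
    Tendsto (stationaryFreq z) (𝓝[>] 0) atTop := by
  have hsin : Tendsto (fun θ => sin (θ / 2) ^ 2) (𝓝[>] 0) (𝓝[>] 0) := by
    refine tendsto_nhdsWithin_iff.2 ⟨?_, ?_⟩
    · have : Continuous fun θ : ℝ => sin (θ / 2) ^ 2 := by fun_prop
      simpa using (this.tendsto 0).mono_left nhdsWithin_le_nhds
    · filter_upwards [Ioo_mem_nhdsGT pi_pos] with θ ⟨h₀, hπ⟩
      exact pow_pos (sin_pos_of_pos_of_lt_pi (by linarith) (by linarith)) 2
  have hcos : Tendsto (fun θ => √z / 2 * cos (θ / 2)) (𝓝[>] 0) (𝓝 (√z / 2)) := by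
    have : Continuous fun θ : ℝ => √z / 2 * cos (θ / 2) := by fun_prop
    simpa using (this.tendsto 0).mono_left nhdsWithin_le_nhds
  exact (hcos.pos_mul_atTop (by positivity) (tendsto_inv_nhdsGT_zero.comp hsin)).congr
    fun θ => (div_eq_mul_inv _ _).symm

lemma surjOn_stationaryFreq (hz : 0 < z) : SurjOn (stationaryFreq z) (Ioo 0 π) (Ioi 0) :=
  haveI := right_nhdsWithin_Ioo_neBot pi_pos
  haveI := left_nhdsWithin_Ioo_neBot pi_pos
  isPreconnected_Ioo.intermediate_value_Ioi (l₁ := 𝓝[Ioo 0 π] π) (l₂ := 𝓝[Ioo 0 π] 0)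
    inf_le_right inf_le_right continuousOn_stationaryFreq
    (tendsto_stationaryFreq_pi.mono_left nhdsWithin_le_nhds)
    ((tendsto_stationaryFreq_nhdsGT_zero hz).mono_left (nhdsWithin_mono _ Ioo_subset_Ioi_self))

lemma sq_mul_stationaryFreq {θ : ℝ} (hθ : θ ≠ 0) :
    θ ^ 2 * stationaryFreq z θ = 2 * √z * cos (θ / 2) / sinc (θ / 2) ^ 2 := by
  rw [sinc_of_ne_zero (by simpa using hθ), stationaryFreq]
  field_simp

lemma tendsto_zero_of_stationaryFreq_eq {ι : Type*} {l : Filter ι} {k θ : ι → ℝ} (hz : 0 < z)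
    (hk : Tendsto k l atTop) (hθ : ∀ᶠ i in l, θ i ∈ Ioo 0 π)
    (heq : ∀ᶠ i in l, stationaryFreq z (θ i) = k i) : Tendsto θ l (𝓝 0) := by
  refine tendsto_order.2 ⟨fun a ha => hθ.mono fun i hi => ha.trans hi.1, fun ε hε => ?_⟩
  have hε' : min ε (π / 2) ∈ Ioo 0 π :=
    ⟨lt_min hε (by positivity), by linarith [min_le_right ε (π / 2), pi_pos]⟩
  filter_upwards [hθ, heq, hk.eventually_gt_atTop (stationaryFreq z (min ε (π / 2)))]
    with i hθi heqi hki
  exact (((stationaryFreq_strictAntiOn hz).lt_iff_gt hε' hθi).1 (heqi ▸ hki)).trans_le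
    (min_le_left _ _)

lemma sqrt_two_mul_sqrt_eq (hz : 0 ≤ z) : √(2 * √z) = √2 * z ^ (1 / 4 : ℝ) := by
  rw [sqrt_mul zero_le_two, sqrt_eq_rpow √z, sqrt_eq_rpow z, ← rpow_mul hz]
  norm_num

lemma tendsto_mul_sqrt_of_stationaryFreq_eq {ι : Type*} {l : Filter ι} {k θ : ι → ℝ} (hz : 0 < z)
    (hk : Tendsto k l atTop) (hθ : ∀ᶠ i in l, θ i ∈ Ioo 0 π)
    (heq : ∀ᶠ i in l, stationaryFreq z (θ i) = k i) :
    Tendsto (fun i => θ i * √(k i)) l (𝓝 (√2 * z ^ (1 / 4 : ℝ))) := by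
  set g : ℝ → ℝ := fun θ => 2 * √z * cos (θ / 2) / sinc (θ / 2) ^ 2
  have hg : ContinuousAt g 0 := ContinuousAt.div (by fun_prop) (by fun_prop) (by simp [sinc_zero])
  have hlim := (hg.tendsto.comp (tendsto_zero_of_stationaryFreq_eq hz hk hθ heq)).sqrt
  rw [show g 0 = 2 * √z by simp [g, sinc_zero], sqrt_two_mul_sqrt_eq hz.le] at hlim
  refine hlim.congr' ?_
  filter_upwards [hθ, heq] with i ⟨h₀, _⟩ heqi
  simp only [Function.comp_apply, g]
  rw [← sq_mul_stationaryFreq h₀.ne', heqi, sqrt_mul (sq_nonneg _), sqrt_sq h₀.le]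

end

theorem stationary_point_existence_and_asymptotics (z : ℝ) (hz : 0 < z) :
    ∃ θs : ℕ → ℝ,
      (∀ k : ℕ, 1 ≤ k →
        (θs k ∈ Set.Ioo 0 Real.pi ∧
          (k : ℝ) = (Real.sqrt z / 2) * Real.cos (θs k / 2) / Real.sin (θs k / 2) ^ 2) ∧
        ∀ θ' ∈ Set.Ioo 0 Real.pi,
          (k : ℝ) = (Real.sqrt z / 2) * Real.cos (θ' / 2) / Real.sin (θ' / 2) ^ 2 →
            θ' = θs k) ∧
      Tendsto (fun k : ℕ => θs k * Real.sqrt k) atTop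
        (nhds (Real.sqrt 2 * z ^ ((1:ℝ)/4))) := by
  have hsol (k : ℕ) (hk : 1 ≤ k) : ∃ θ ∈ Ioo 0 π, stationaryFreq z θ = k :=
    surjOn_stationaryFreq hz (show (0 : ℝ) < k by exact_mod_cast hk)
  set θs : ℕ → ℝ := fun k => Function.invFunOn (stationaryFreq z) (Ioo 0 π) k
  have hmem (k : ℕ) (hk : 1 ≤ k) : θs k ∈ Ioo 0 π := Function.invFunOn_mem (hsol k hk)
  have heq (k : ℕ) (hk : 1 ≤ k) : stationaryFreq z (θs k) = k := Function.invFunOn_eq (hsol k hk)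
  refine ⟨θs, fun k hk => ⟨⟨hmem k hk, (heq k hk).symm⟩, fun θ' hθ' hθ'_eq => ?_⟩, ?_⟩
  · exact (stationaryFreq_strictAntiOn hz).injOn hθ' (hmem k hk) (hθ'_eq.symm.trans (heq k hk).symm)
  · exact tendsto_mul_sqrt_of_stationaryFreq_eq hz tendsto_natCast_atTop_atTop
      (eventually_ge_atTop 1 |>.mono hmem) (eventually_ge_atTop 1 |>.mono heq)
end
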